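/- arXiv:1603.07560 — 3 statements merged into one kernel-verified Lean document; each statement's English description precedes it below -/
import Mathlib

section
/- Let Γ be a discrete subgroup of (ℝ^d,+), ν > 0, and χ : Γ → ℂ a character with values in the unit circle. Let ψ : ℝ^d → ℂ be a smooth function with compact support contained in the interior of a fundamental domain Λ(Γ) of Γ. Then the Poincaré series P(x) = Σ_{γ∈Γ} conj(χ(γ)) · exp(−ν⟨x + γ/2, γ⟩) · ψ(x+γ) converges, satisfies P(x+γ) = χ(γ) exp(ν⟨x + γ/2, γ⟩) P(x) for all x ∈ ℝ^d and γ ∈ Γ, and agrees with ψ on Λ(Γ) (in particular P is not identically zero when ψ is not). -/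
/-- the Poincaré series attached to a smooth compactly supported `ψ`
with support in the interior of a fundamental domain converges, satisfies the
likewise-theta functional equation, and agrees with `ψ` on the fundamental domain. -/
theorem stmt1 (d : ℕ) (ν : ℝ) (hν : 0 < ν)
    (Γ : AddSubgroup (Fin d → ℝ)) (hdisc : DiscreteTopology Γ)
    (χ : Γ → ℂ) (hχ1 : ∀ γ, ‖χ γ‖ = 1)
    (hχ : ∀ γ γ', χ (γ + γ') = χ γ * χ γ')
    (Λ : Set (Fin d → ℝ))
    (hΛ : ∀ x : Fin d → ℝ, ∃! γ : Γ, x - (γ : Fin d → ℝ) ∈ Λ)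
    (ψ : (Fin d → ℝ) → ℂ) (hψsmooth : ContDiff ℝ (⊤ : ℕ∞) ψ)
    (hψcpt : HasCompactSupport ψ) (hψsupp : tsupport ψ ⊆ interior Λ) :
    (∀ x : Fin d → ℝ, Summable fun γ : Γ =>
      (starRingEnd ℂ) (χ γ) *
        Complex.exp ((-(ν * ∑ i, (x i + (γ : Fin d → ℝ) i / 2) * (γ : Fin d → ℝ) i) : ℝ)) *
        ψ (x + (γ : Fin d → ℝ))) ∧
    (∀ (x : Fin d → ℝ) (γ : Γ),
      (∑' γ' : Γ, (starRingEnd ℂ) (χ γ') *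
        Complex.exp ((-(ν * ∑ i, ((x + (γ : Fin d → ℝ)) i + (γ' : Fin d → ℝ) i / 2)
            * (γ' : Fin d → ℝ) i) : ℝ)) *
        ψ (x + (γ : Fin d → ℝ) + (γ' : Fin d → ℝ)))
      = χ γ * Complex.exp ((ν * ∑ i, (x i + (γ : Fin d → ℝ) i / 2) * (γ : Fin d → ℝ) i : ℝ)) *
        ∑' γ' : Γ, (starRingEnd ℂ) (χ γ') *
          Complex.exp ((-(ν * ∑ i, (x i + (γ' : Fin d → ℝ) i / 2) * (γ' : Fin d → ℝ) i) : ℝ)) *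
          ψ (x + (γ' : Fin d → ℝ))) ∧
    (∀ x ∈ Λ,
      (∑' γ' : Γ, (starRingEnd ℂ) (χ γ') *
        Complex.exp ((-(ν * ∑ i, (x i + (γ' : Fin d → ℝ) i / 2) * (γ' : Fin d → ℝ) i) : ℝ)) *
        ψ (x + (γ' : Fin d → ℝ))) = ψ x) := by
  -- ψ vanishes outside Λ
  have hmem : ∀ y : Fin d → ℝ, ψ y ≠ 0 → y ∈ Λ := fun y hy =>
    interior_subset (hψsupp (subset_tsupport ψ hy))
  -- at most one nonzero term
  have huniq : ∀ (x : Fin d → ℝ) (γ₁ γ₂ : Γ),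
      ψ (x + (γ₁ : Fin d → ℝ)) ≠ 0 → ψ (x + (γ₂ : Fin d → ℝ)) ≠ 0 → γ₁ = γ₂ := by
    intro x γ₁ γ₂ h1 h2
    obtain ⟨γ₀, -, hu⟩ := hΛ x
    have e1 : (-γ₁ : Γ) = γ₀ := hu (-γ₁) (by
      have := hmem _ h1
      simpa [sub_neg_eq_add, add_comm] using this)
    have e2 : (-γ₂ : Γ) = γ₀ := hu (-γ₂) (by
      have := hmem _ h2
      simpa [sub_neg_eq_add, add_comm] using this)
    have : (-γ₁ : Γ) = -γ₂ := e1.trans e2.symm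
    exact neg_injective this
  -- χ 0 = 1
  have hχne : ∀ γ, χ γ ≠ 0 := by
    intro γ h
    have := hχ1 γ
    rw [h] at this; simpa using this
  have hχ0 : χ 0 = 1 := by
    have h := hχ 0 0
    simp only [add_zero] at h
    exact (mul_left_cancel₀ (hχne 0) (show χ 0 * 1 = χ 0 * χ 0 by rw [mul_one, ← h])).symm
  have hχinv : ∀ γ, χ γ * χ (-γ) = 1 := by
    intro γ; rw [← hχ]; simp [hχ0]
  have hconj : ∀ γ, (starRingEnd ℂ) (χ γ) = χ (-γ) := by
    intro γ
    have h1 : χ γ * (starRingEnd ℂ) (χ γ) = 1 := by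
      rw [Complex.mul_conj]
      norm_cast
      rw [Complex.normSq_eq_norm_sq, hχ1]
      norm_num
    exact mul_left_cancel₀ (hχne γ) (by rw [h1, hχinv])
  -- summability
  have hsum : ∀ x : Fin d → ℝ, Summable fun γ : Γ =>
      (starRingEnd ℂ) (χ γ) *
        Complex.exp ((-(ν * ∑ i, (x i + (γ : Fin d → ℝ) i / 2) * (γ : Fin d → ℝ) i) : ℝ)) *
        ψ (x + (γ : Fin d → ℝ)) := by
    intro x
    by_cases h : ∃ γ₀ : Γ, ψ (x + (γ₀ : Fin d → ℝ)) ≠ 0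
    · obtain ⟨γ₀, hγ₀⟩ := h
      apply summable_of_ne_finset_zero (s := {γ₀})
      intro γ hγ
      simp only [Finset.mem_singleton] at hγ
      have : ψ (x + (γ : Fin d → ℝ)) = 0 := by
        by_contra hne
        exact hγ (huniq x γ γ₀ hne hγ₀)
      simp [this]
    · push_neg at h
      apply summable_of_ne_finset_zero (s := ∅)
      intro γ _
      simp [h γ]
  refine ⟨hsum, ?_, ?_⟩
  · -- functional equation
    intro x γ
    rw [← Equiv.tsum_eq (Equiv.subRight γ)]
    rw [← tsum_mul_left]
    apply tsum_congr
    intro γ''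
    simp only [Equiv.subRight_apply]
    have hcoe : ((γ'' - γ : Γ) : Fin d → ℝ) = (γ'' : Fin d → ℝ) - (γ : Fin d → ℝ) := rfl
    have harg : x + (γ : Fin d → ℝ) + ((γ'' : Fin d → ℝ) - (γ : Fin d → ℝ))
        = x + (γ'' : Fin d → ℝ) := by abel
    have hchi : (starRingEnd ℂ) (χ (γ'' - γ)) = χ γ * (starRingEnd ℂ) (χ γ'') := by
      rw [hconj, hconj, neg_sub, sub_eq_add_neg, hχ]
    have hexp : (-(ν * ∑ i, ((x + (γ : Fin d → ℝ)) i + ((γ'' : Fin d → ℝ) i - (γ : Fin d → ℝ) i) / 2)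
          * ((γ'' : Fin d → ℝ) i - (γ : Fin d → ℝ) i)) : ℝ)
        = (ν * ∑ i, (x i + (γ : Fin d → ℝ) i / 2) * (γ : Fin d → ℝ) i)
          + (-(ν * ∑ i, (x i + (γ'' : Fin d → ℝ) i / 2) * (γ'' : Fin d → ℝ) i)) := by
      have : (∑ i, ((x + (γ : Fin d → ℝ)) i + ((γ'' : Fin d → ℝ) i - (γ : Fin d → ℝ) i) / 2)
            * ((γ'' : Fin d → ℝ) i - (γ : Fin d → ℝ) i))
          = (∑ i, (x i + (γ'' : Fin d → ℝ) i / 2) * (γ'' : Fin d → ℝ) i)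
            - (∑ i, (x i + (γ : Fin d → ℝ) i / 2) * (γ : Fin d → ℝ) i) := by
        rw [← Finset.sum_sub_distrib]
        apply Finset.sum_congr rfl
        intro i _
        simp only [Pi.add_apply]
        ring
      rw [this]; ring
    rw [hcoe]
    simp only [Pi.sub_apply] at *
    rw [harg, hchi, hexp]
    push_cast
    rw [Complex.exp_add]
    ring
  · -- equals ψ on Λ
    intro x hx
    rw [tsum_eq_single (0 : Γ)]
    · simp [hχ0]
    · intro γ' hγ'
      have : ψ (x + (γ' : Fin d → ℝ)) = 0 := by
        by_contra hne
        obtain ⟨γ₀, -, hu⟩ := hΛ x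
        have e1 : (-γ' : Γ) = γ₀ := hu (-γ') (by
          simpa [sub_neg_eq_add, add_comm] using hmem _ hne)
        have e2 : (0 : Γ) = γ₀ := hu 0 (by simpa using hx)
        have : (-γ' : Γ) = 0 := e1.trans e2.symm
        exact hγ' (neg_eq_zero.mp this)
      simp [this]
end

section
/- For the one-dimensional physicists' Hermite polynomials H_n and ν > 0, the Segal–Bargmann transform satisfies: (ν/π)^{3/4} ∫_ℝ exp(−(ν/2)z² + √2 ν x z) H_n(√ν x) exp(−ν x²) dx = (ν/π)^{1/4} (2ν)^{n/2} z^n for every z ∈ ℂ. -/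
/-!
With `t = √ν x` and `w = √(2ν) z` the integral becomes `e^{-w²/4} / √ν` times
`∫ e^{wt} H_n(t) e^{-t²} dt`. Since `H_n(t) e^{-t²}` is `(-1)ⁿ` times the `n`-th derivative of
the Gaussian, `n` integrations by parts move every derivative onto `e^{wt}`, each producing a
factor `-w` (all integrands are a polynomial times a Gaussian times `e^{wt}`, hence integrable).
What remains is `∫ e^{wt - t²} dt = √π e^{w²/4}`.
-/

/-- The physicists' Hermite polynomial `H_n(ξ) = (−1)^n e^{ξ²} (d/dξ)^n e^{−ξ²}`. -/
noncomputable def hermiteP (n : ℕ) (x : ℝ) : ℝ :=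
  (-1 : ℝ) ^ n * Real.exp (x ^ 2) * iteratedDeriv n (fun t : ℝ => Real.exp (-t ^ 2)) x

open MeasureTheory Polynomial Real

theorem ContDiff.hasDerivAt_iteratedDeriv {𝕜 F : Type*} [NontriviallyNormedField 𝕜]
    [NormedAddCommGroup F] [NormedSpace 𝕜 F] {f : 𝕜 → F} {n : ℕ} (hf : ContDiff 𝕜 (n + 1) f)
    (x : 𝕜) : HasDerivAt (iteratedDeriv n f) (iteratedDeriv (n + 1) f x) x := by
  rw [iteratedDeriv_succ]
  exact (hf.differentiable_iteratedDeriv' n x).hasDerivAt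

lemma integrable_eval_mul_exp_neg_mul_sq (p : ℝ[X]) {b : ℝ} (hb : 0 < b) :
    Integrable fun t : ℝ => p.eval t * exp (-b * t ^ 2) := by
  induction p using Polynomial.induction_on' with
  | add p q hp hq => simpa only [eval_add, add_mul] using hp.fun_add hq
  | monomial k a =>
    have hk := integrable_rpow_mul_exp_neg_mul_sq hb (s := k)
      (by linarith [k.cast_nonneg (α := ℝ)])
    simp only [rpow_natCast] at hk
    simpa [mul_assoc] using hk.const_mul a

lemma integrable_cexp_mul_eval_mul_exp_neg_sq (p : ℝ[X]) (w : ℂ) :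
    Integrable fun t : ℝ => Complex.exp (w * t) * ((p.eval t * exp (-t ^ 2) : ℝ) : ℂ) := by
  -- split `e^{-t²}` as `e^{-t²/2} · e^{-t²/2}` and absorb `e^{wt}` into the bounded second half
  have hbdd (t : ℝ) : ‖Complex.exp (w * t - t ^ 2 / 2)‖ ≤ exp (w.re ^ 2 / 2) := by
    have hre : (w * t - t ^ 2 / 2).re = w.re * t - t ^ 2 / 2 := by
      simp [← Complex.ofReal_pow]
    rw [Complex.norm_exp, exp_le_exp, hre]
    nlinarith [sq_nonneg (t - w.re)]
  refine ((integrable_eval_mul_exp_neg_mul_sq p one_half_pos).ofReal.bdd_mul (by fun_prop)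
    (.of_forall hbdd)).congr (.of_forall fun t => ?_)
  dsimp only
  rw [RCLike.ofReal_eq_complex_ofReal]
  simp only [Complex.ofReal_mul, Complex.ofReal_exp]
  rw [mul_left_comm, ← Complex.exp_add, mul_left_comm, ← Complex.exp_add]
  congr 2
  push_cast
  ring

lemma exists_iteratedDeriv_exp_neg_sq_eq (n : ℕ) : ∃ p : ℝ[X],
    iteratedDeriv n (fun s : ℝ => exp (-s ^ 2)) = fun t => p.eval t * exp (-t ^ 2) := by
  induction n with
  | zero => exact ⟨1, by simp⟩
  | succ n ih =>
    obtain ⟨p, hp⟩ := ih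
    refine ⟨derivative p - 2 * X * p, funext fun t => ?_⟩
    have hexp : HasDerivAt (fun t : ℝ => exp (-t ^ 2)) (-(2 * t) * exp (-t ^ 2)) t := by
      simpa [mul_comm] using ((hasDerivAt_pow 2 t).neg).exp
    rw [iteratedDeriv_succ, hp, ((p.hasDerivAt t).fun_mul hexp).deriv]
    simp only [eval_sub, eval_mul, eval_ofNat, eval_X]
    ring

lemma integrable_cexp_mul_iteratedDeriv_exp_neg_sq (w : ℂ) (n : ℕ) :
    Integrable fun t : ℝ =>
      Complex.exp (w * t) * ((iteratedDeriv n (fun s : ℝ => exp (-s ^ 2)) t : ℝ) : ℂ) := by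
  obtain ⟨p, hp⟩ := exists_iteratedDeriv_exp_neg_sq_eq n
  simpa only [hp] using integrable_cexp_mul_eval_mul_exp_neg_sq p w

theorem integral_cexp_mul_iteratedDeriv_exp_neg_sq (w : ℂ) (n : ℕ) :
    ∫ t : ℝ, Complex.exp (w * t) * ((iteratedDeriv n (fun s : ℝ => exp (-s ^ 2)) t : ℝ) : ℂ)
      = (-w) ^ n * √π * Complex.exp (w ^ 2 / 4) := by
  induction n with
  | zero =>
    have h (t : ℝ) : Complex.exp (w * t) * ((exp (-t ^ 2) : ℝ) : ℂ)
        = Complex.exp (-1 * t ^ 2 + w * t + 0) := by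
      rw [Complex.ofReal_exp, ← Complex.exp_add]
      push_cast
      ring_nf
    simp only [iteratedDeriv_zero, h]
    rw [integral_cexp_quadratic (by norm_num), sqrt_eq_rpow, Complex.ofReal_cpow pi_pos.le]
    push_cast
    ring_nf
  | succ n ih =>
    have hexp (t : ℝ) :
        HasDerivAt (fun t : ℝ => Complex.exp (w * t)) (w * Complex.exp (w * t)) t := by
      simpa [mul_comm] using ((hasDerivAt_id (t : ℂ)).const_mul w).cexp.comp_ofReal
    have hsmooth : ContDiff ℝ (n + 1) fun s : ℝ => exp (-s ^ 2) := by fun_prop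
    have hparts := integral_mul_deriv_eq_deriv_mul_of_integrable
      (fun t _ => hexp t) (fun t _ => (hsmooth.hasDerivAt_iteratedDeriv t).ofReal_comp)
      (integrable_cexp_mul_iteratedDeriv_exp_neg_sq w (n + 1))
      (by simpa only [Pi.mul_def, mul_assoc] using
        (integrable_cexp_mul_iteratedDeriv_exp_neg_sq w n).const_mul w)
      (integrable_cexp_mul_iteratedDeriv_exp_neg_sq w n)
    simp only [hparts, mul_assoc, integral_const_mul, ih]
    ring

theorem integral_cexp_mul_hermiteP_mul_exp_neg_sq (w : ℂ) (n : ℕ) :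
    ∫ t : ℝ, Complex.exp (w * t) * ((hermiteP n t * exp (-t ^ 2) : ℝ) : ℂ)
      = w ^ n * √π * Complex.exp (w ^ 2 / 4) := by
  have h (t : ℝ) : hermiteP n t * exp (-t ^ 2)
      = (-1) ^ n * iteratedDeriv n (fun s : ℝ => exp (-s ^ 2)) t := by
    rw [hermiteP, mul_right_comm, mul_assoc ((-1 : ℝ) ^ n), ← exp_add, add_neg_cancel,
      exp_zero, mul_one]
  simp only [h, Complex.ofReal_mul, Complex.ofReal_pow, Complex.ofReal_neg, Complex.ofReal_one,
    mul_left_comm _ ((-1 : ℂ) ^ n), integral_const_mul, integral_cexp_mul_iteratedDeriv_exp_neg_sq]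
  rw [← mul_assoc, ← mul_assoc, ← mul_pow, neg_one_mul, neg_neg]

lemma segalBargmann_integrand_eq {ν : ℝ} (hν : 0 < ν) (n : ℕ) (z : ℂ) (x : ℝ) :
    Complex.exp (-((ν : ℂ) / 2) * z ^ 2 + √2 * (ν : ℂ) * (x : ℂ) * z) *
        ((hermiteP n (√ν * x) : ℝ) : ℂ) * ((exp (-ν * x ^ 2) : ℝ) : ℂ)
      = Complex.exp (-((√(2 * ν) * z) ^ 2 / 4)) * (Complex.exp (√(2 * ν) * z * ↑(√ν * x)) *
          ((hermiteP n (√ν * x) * exp (-(√ν * x) ^ 2) : ℝ) : ℂ)) := by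
  have hsq : ((√(2 * ν) : ℝ) : ℂ) ^ 2 = 2 * ν := by
    rw [← Complex.ofReal_pow, sq_sqrt (by positivity)]
    push_cast
    ring
  have hmul : ((√(2 * ν) : ℝ) : ℂ) * √ν = √2 * ν := by
    rw [← Complex.ofReal_mul, sqrt_mul zero_le_two, mul_assoc, mul_self_sqrt hν.le]
    push_cast
    ring
  have harg : -((ν : ℂ) / 2) * z ^ 2 + √2 * (ν : ℂ) * (x : ℂ) * z
      = -((√(2 * ν) * z) ^ 2 / 4) + √(2 * ν) * z * ↑(√ν * x) := by
    push_cast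
    linear_combination (x * z : ℂ) * hmul.symm + z ^ 2 / 4 * hsq
  rw [harg, Complex.exp_add, mul_pow (√ν), sq_sqrt hν.le, neg_mul]
  push_cast
  ring

lemma div_rpow_three_fourths_mul_sqrt_div_sqrt {a b : ℝ} (ha : 0 < a) (hb : 0 < b) :
    (a / b) ^ (3 / 4 : ℝ) * √b / √a = (a / b) ^ (1 / 4 : ℝ) := by
  rw [show (3 / 4 : ℝ) = 1 / 4 + 1 / 2 by norm_num, rpow_add (div_pos ha hb), ← sqrt_eq_rpow,
    sqrt_div' _ hb.le]
  field_simp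

/-- the Segal–Bargmann transform of the `n`-th Hermite function:
`(ν/π)^{3/4} ∫_ℝ exp(−(ν/2)z² + √2 ν xz) H_n(√ν x) e^{−νx²} dx = (ν/π)^{1/4} (2ν)^{n/2} zⁿ`. -/
theorem stmt10 (ν : ℝ) (hν : 0 < ν) (n : ℕ) (z : ℂ) :
    (((ν / Real.pi) ^ ((3 : ℝ) / 4) : ℝ) : ℂ) *
      ∫ x : ℝ, Complex.exp (-((ν : ℂ) / 2) * z ^ 2 + Real.sqrt 2 * (ν : ℂ) * (x : ℂ) * z) *
        ((hermiteP n (Real.sqrt ν * x) : ℝ) : ℂ) * ((Real.exp (-ν * x ^ 2) : ℝ) : ℂ)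
    = (((ν / Real.pi) ^ ((1 : ℝ) / 4) * (2 * ν) ^ ((n : ℝ) / 2) : ℝ) : ℂ) * z ^ n := by
  set w : ℂ := √(2 * ν) * z
  simp only [segalBargmann_integrand_eq hν, integral_const_mul]
  rw [Measure.integral_comp_mul_left (fun t : ℝ => Complex.exp (w * t) *
      ((hermiteP n t * exp (-t ^ 2) : ℝ) : ℂ)), integral_cexp_mul_hermiteP_mul_exp_neg_sq,
    abs_of_pos (inv_pos.2 (sqrt_pos.2 hν)), Complex.real_smul,
    ← div_rpow_three_fourths_mul_sqrt_div_sqrt hν pi_pos,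
    rpow_div_two_eq_sqrt _ (by positivity), rpow_natCast]
  have hcancel : Complex.exp (-(w ^ 2 / 4)) * Complex.exp (w ^ 2 / 4) = 1 := by
    rw [← Complex.exp_add, neg_add_cancel, Complex.exp_zero]
  push_cast
  linear_combination
    (((ν / π) ^ (3 / 4 : ℝ) : ℝ) * (√ν : ℂ)⁻¹ * (√(2 * ν) * z) ^ n * √π : ℂ) * hcancel
end

section
/- Let Γ ⊂ ℝ^d be a discrete subgroup viewed inside ℂ^d = ℝ^d + iℝ^d, ν > 0, and χ a unit-circle-valued character on Γ. Suppose φ : ℝ^d → ℂ is measurable, satisfies φ(x+γ) = χ(γ) exp(ν⟨x+γ/2,γ⟩) φ(x), and the integral Bφ(z) = (ν/π)^{3d/4} ∫_{ℝ^d} exp(√2 ν ⟨z,x⟩ − (ν/2)⟨z,z⟩) φ(x) e^{−ν‖x‖²} dx converges absolutely for all z ∈ ℂ^d. Then for every γ ∈ Γ and z ∈ ℂ^d, Bφ(z + γ/√2) = χ(γ) exp(ν H(z + γ/(2√2), γ/√2)) Bφ(z), where H(z,w) = ⟨z, conj(w)⟩ is the standard Hermitian product on ℂ^d. -/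
/-!
Translating the integration variable by `γ` (Lebesgue measure is translation invariant) and
inserting the quasi-periodicity of `φ` turns the integrand of `Bφ(z + γ/√2)` into the integrand
of `Bφ(z)` times a factor independent of `x`: in the exponent, the terms linear in `x` cancel
and what is left is `ν H(z + γ/(2√2), γ/√2)`.
-/

open MeasureTheory

lemma bargmann_exponent_shift (ν z x g s : ℂ) (hs : s * s = 2) :
    s * ν * ((z + g / s) * (x + g)) - ν / 2 * ((z + g / s) * (z + g / s))
        + ν * ((x + g / 2) * g) - ν * ((x + g) * (x + g))
      = s * ν * (z * x) - ν / 2 * (z * z) - ν * (x * x) + ν * ((z + g / (2 * s)) * (g / s)) := by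
  have hs0 : s ≠ 0 := by rintro rfl; norm_num at hs
  field_simp
  linear_combination (2 * ν * s * z * g + ν * g ^ 2) * hs

variable {ι : Type*} [Fintype ι]

noncomputable def bargmannIntegrand (ν : ℝ) (φ : (ι → ℝ) → ℂ) (z : ι → ℂ) (x : ι → ℝ) : ℂ :=
  Complex.exp (Real.sqrt 2 * (ν : ℂ) * (∑ i, z i * (x i : ℂ)) -
      ((ν : ℂ) / 2) * ∑ i, z i * z i) * φ x *
    ((Real.exp (-ν * ∑ i, x i * x i) : ℝ) : ℂ)

lemma bargmannIntegrand_add_add (ν : ℝ) (φ : (ι → ℝ) → ℂ) (c : ℂ) (g : ι → ℝ)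
    (hφ : ∀ x, φ (x + g) = c * Complex.exp ((ν * ∑ i, (x i + g i / 2) * g i : ℝ)) * φ x)
    (z : ι → ℂ) (x : ι → ℝ) :
    bargmannIntegrand ν φ (z + fun i => ((g i / Real.sqrt 2 : ℝ) : ℂ)) (x + g) =
      c * Complex.exp ((ν : ℂ) * ∑ i, (z i + ((g i / (2 * Real.sqrt 2) : ℝ) : ℂ)) *
          (starRingEnd ℂ) ((g i / Real.sqrt 2 : ℝ) : ℂ)) *
        bargmannIntegrand ν φ z x := by
  have hs : (Real.sqrt 2 : ℂ) * Real.sqrt 2 = 2 := by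
    exact_mod_cast Real.mul_self_sqrt zero_le_two
  simp only [bargmannIntegrand, hφ, Pi.add_apply, Complex.ofReal_exp, Complex.conj_ofReal]
  have hexp : ∀ a b e : ℂ, Complex.exp a * (c * Complex.exp b * φ x) * Complex.exp e =
      c * (Complex.exp (a + b + e) * φ x) := fun a b e => by simp only [Complex.exp_add]; ring
  have hexp' : ∀ a b e : ℂ, c * Complex.exp a * (Complex.exp b * φ x * Complex.exp e) =
      c * (Complex.exp (b + e + a) * φ x) := fun a b e => by simp only [Complex.exp_add]; ring
  rw [hexp, hexp']
  congr 3
  push_cast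
  simp only [Finset.mul_sum, ← Finset.sum_add_distrib, ← Finset.sum_sub_distrib, neg_mul,
    ← sub_eq_add_neg]
  exact Finset.sum_congr rfl fun i _ => bargmann_exponent_shift _ _ _ _ _ hs

lemma integral_bargmannIntegrand_add (ν : ℝ) (φ : (ι → ℝ) → ℂ) (c : ℂ) (g : ι → ℝ)
    (hφ : ∀ x, φ (x + g) = c * Complex.exp ((ν * ∑ i, (x i + g i / 2) * g i : ℝ)) * φ x)
    (z : ι → ℂ) :
    ∫ x, bargmannIntegrand ν φ (z + fun i => ((g i / Real.sqrt 2 : ℝ) : ℂ)) x =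
      c * Complex.exp ((ν : ℂ) * ∑ i, (z i + ((g i / (2 * Real.sqrt 2) : ℝ) : ℂ)) *
          (starRingEnd ℂ) ((g i / Real.sqrt 2 : ℝ) : ℂ)) *
        ∫ x, bargmannIntegrand ν φ z x := by
  rw [← integral_add_right_eq_self _ g]
  simp only [bargmannIntegrand_add_add ν φ c g hφ z]
  exact integral_const_mul _ _

theorem stmt11_general (d : ℕ) (ν : ℝ) (Γ : AddSubgroup (Fin d → ℝ)) (χ : Γ → ℂ)
    (φ : (Fin d → ℝ) → ℂ)
    (hφe : ∀ (x : Fin d → ℝ) (γ : Γ),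
      φ (x + (γ : Fin d → ℝ)) =
        χ γ * Complex.exp ((ν * ∑ i, (x i + (γ : Fin d → ℝ) i / 2) * (γ : Fin d → ℝ) i : ℝ))
          * φ x) :
    ∀ (γ : Γ) (z : Fin d → ℂ),
      (fun w : Fin d → ℂ => (((ν / Real.pi) ^ ((3 : ℝ) * d / 4) : ℝ) : ℂ) *
        ∫ x : Fin d → ℝ,
          Complex.exp (Real.sqrt 2 * (ν : ℂ) * (∑ i, w i * (x i : ℂ)) -
              ((ν : ℂ) / 2) * ∑ i, w i * w i) * φ x *
            ((Real.exp (-ν * ∑ i, x i * x i) : ℝ) : ℂ))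
        (z + fun i => (((γ : Fin d → ℝ) i / Real.sqrt 2 : ℝ) : ℂ))
      = χ γ *
        Complex.exp ((ν : ℂ) * ∑ i,
          (z i + (((γ : Fin d → ℝ) i / (2 * Real.sqrt 2) : ℝ) : ℂ)) *
            (starRingEnd ℂ) (((((γ : Fin d → ℝ) i / Real.sqrt 2 : ℝ)) : ℂ))) *
        (fun w : Fin d → ℂ => (((ν / Real.pi) ^ ((3 : ℝ) * d / 4) : ℝ) : ℂ) *
          ∫ x : Fin d → ℝ,
            Complex.exp (Real.sqrt 2 * (ν : ℂ) * (∑ i, w i * (x i : ℂ)) -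
                ((ν : ℂ) / 2) * ∑ i, w i * w i) * φ x *
              ((Real.exp (-ν * ∑ i, x i * x i) : ℝ) : ℂ)) z := by
  intro γ z
  have h := integral_bargmannIntegrand_add ν φ (χ γ) γ (hφe · γ) z
  simp only [bargmannIntegrand] at h
  beta_reduce
  rw [h]
  ring

/-- the Segal–Bargmann transform of a likewise-theta function satisfies the
functional equation of `(Γ/√2, χ~)`-holomorphic theta functions:
`Bφ(z + γ/√2) = χ(γ) exp(ν H(z + γ/(2√2), γ/√2)) Bφ(z)` where `H(z,w) = ⟨z, conj w⟩`. -/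
theorem stmt11 (d : ℕ) (ν : ℝ) (hν : 0 < ν)
    (Γ : AddSubgroup (Fin d → ℝ)) (hdisc : DiscreteTopology Γ)
    (χ : Γ → ℂ) (hχ1 : ∀ γ, ‖χ γ‖ = 1)
    (hχ : ∀ γ γ', χ (γ + γ') = χ γ * χ γ')
    (φ : (Fin d → ℝ) → ℂ) (hmeas : Measurable φ)
    (hφe : ∀ (x : Fin d → ℝ) (γ : Γ),
      φ (x + (γ : Fin d → ℝ)) =
        χ γ * Complex.exp ((ν * ∑ i, (x i + (γ : Fin d → ℝ) i / 2) * (γ : Fin d → ℝ) i : ℝ))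
          * φ x)
    (hint : ∀ z : Fin d → ℂ, Integrable (fun x : Fin d → ℝ =>
      Complex.exp (Real.sqrt 2 * (ν : ℂ) * (∑ i, z i * (x i : ℂ)) -
          ((ν : ℂ) / 2) * ∑ i, z i * z i) * φ x *
        ((Real.exp (-ν * ∑ i, x i * x i) : ℝ) : ℂ))) :
    ∀ (γ : Γ) (z : Fin d → ℂ),
      (fun w : Fin d → ℂ => (((ν / Real.pi) ^ ((3 : ℝ) * d / 4) : ℝ) : ℂ) *
        ∫ x : Fin d → ℝ,
          Complex.exp (Real.sqrt 2 * (ν : ℂ) * (∑ i, w i * (x i : ℂ)) -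
              ((ν : ℂ) / 2) * ∑ i, w i * w i) * φ x *
            ((Real.exp (-ν * ∑ i, x i * x i) : ℝ) : ℂ))
        (z + fun i => (((γ : Fin d → ℝ) i / Real.sqrt 2 : ℝ) : ℂ))
      = χ γ *
        Complex.exp ((ν : ℂ) * ∑ i,
          (z i + (((γ : Fin d → ℝ) i / (2 * Real.sqrt 2) : ℝ) : ℂ)) *
            (starRingEnd ℂ) (((((γ : Fin d → ℝ) i / Real.sqrt 2 : ℝ)) : ℂ))) *
        (fun w : Fin d → ℂ => (((ν / Real.pi) ^ ((3 : ℝ) * d / 4) : ℝ) : ℂ) *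
          ∫ x : Fin d → ℝ,
            Complex.exp (Real.sqrt 2 * (ν : ℂ) * (∑ i, w i * (x i : ℂ)) -
                ((ν : ℂ) / 2) * ∑ i, w i * w i) * φ x *
              ((Real.exp (-ν * ∑ i, x i * x i) : ℝ) : ℂ)) z :=
  stmt11_general d ν Γ χ φ hφe
end
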